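/- arXiv:2309.05871 — 3 statements merged into one kernel-verified Lean document; each statement's English description precedes it below -/
import Mathlib

section
/- For every ε ≥ 0, every δ with 0 ≤ δ ≤ 1, and every distribution p on V, the vector T_{ε,δ}(p) is again a distribution on V; equivalently, the modified prefix sums s'_k = min{1, min{e^ε·s_k, 1 − e^{−ε}(1 − s_k)} + δ} are nondecreasing in k and satisfy s'_q = 1, so the entries of T_{ε,δ}(p) are nonnegative and sum to 1. -/
open Finset

/-- Prefix sum `s_k = p_1 + ⋯ + p_k` (0-indexed internally: sum of entries with index `< k`). -/
noncomputable def prefixSum (q : ℕ) (p : Fin q → ℝ) (k : ℕ) : ℝ :=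
  ∑ i ∈ Finset.univ.filter (fun i : Fin q => (i : ℕ) < k), p i

/-- `p` is a probability distribution on `V = {1, …, q}`. -/
def IsDist (q : ℕ) (p : Fin q → ℝ) : Prop :=
  (∀ k, 0 ≤ p k) ∧ ∑ k, p k = 1

/-- The modified prefix sums `s'_k` defining the operator `T_{ε,δ}`:
`s'_0 = 0` and `s'_k = min {1, min {e^ε s_k, 1 - e^{-ε} (1 - s_k)} + δ}` for `k ≥ 1`. -/
noncomputable def sPrime (ε δ : ℝ) (q : ℕ) (p : Fin q → ℝ) (k : ℕ) : ℝ :=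
  if k = 0 then 0
  else min 1 (min (Real.exp ε * prefixSum q p k)
      (1 - Real.exp (-ε) * (1 - prefixSum q p k)) + δ)

/-- The operator `T_{ε,δ}`: `(T_{ε,δ} p)_k = s'_k - s'_{k-1}`. -/
noncomputable def Tmap (ε δ : ℝ) (q : ℕ) (p : Fin q → ℝ) : Fin q → ℝ :=
  fun k => sPrime ε δ q p ((k : ℕ) + 1) - sPrime ε δ q p (k : ℕ)

/-- `P` and `Q` are `(ε,δ)`-close: for every `S ⊆ V`,
`P(S) ≤ e^ε Q(S) + δ` and `Q(S) ≤ e^ε P(S) + δ`. -/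
def Close (ε δ : ℝ) (q : ℕ) (P Q : Fin q → ℝ) : Prop :=
  ∀ S : Finset (Fin q),
    (∑ k ∈ S, P k) ≤ Real.exp ε * (∑ k ∈ S, Q k) + δ ∧
    (∑ k ∈ S, Q k) ≤ Real.exp ε * (∑ k ∈ S, P k) + δ

/-- Dominance ordering: `x ⪯ y` iff every prefix sum of `x` is at most that of `y`. -/
def Dom (q : ℕ) (x y : Fin q → ℝ) : Prop :=
  ∀ k : ℕ, k ≤ q → prefixSum q x k ≤ prefixSum q y k

/-! The map `s ↦ min (e^ε s) (1 - e^{-ε} (1 - s))` is nondecreasing, sends `[0, 1]` into `[0, 1]`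
when `ε ≥ 0`, and fixes `1`. Adding `δ ≥ 0` and capping at `1` keeps all three properties, so the
modified prefix sums climb monotonically from `s'_0 = 0` to `s'_q = 1`, and their increments form
a distribution. -/

theorem prefixSum_eq_sum_of_le {q k : ℕ} (p : Fin q → ℝ) (hk : q ≤ k) :
    prefixSum q p k = ∑ i, p i := by
  unfold prefixSum
  rw [Finset.filter_true_of_mem fun i _ => i.isLt.trans_le hk]

section Nonneg

variable {q : ℕ} {p : Fin q → ℝ} (hp : ∀ i, 0 ≤ p i)
include hp

theorem prefixSum_nonneg (k : ℕ) : 0 ≤ prefixSum q p k :=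
  Finset.sum_nonneg fun i _ => hp i

theorem prefixSum_le_sum (k : ℕ) : prefixSum q p k ≤ ∑ i, p i :=
  Finset.sum_le_sum_of_subset_of_nonneg (Finset.filter_subset _ _) fun i _ _ => hp i

theorem prefixSum_mono : Monotone (prefixSum q p) := fun _ _ hjk =>
  Finset.sum_le_sum_of_subset_of_nonneg
    (Finset.monotone_filter_right _ fun _ _ hi => hi.trans_le hjk)
    fun i _ _ => hp i

end Nonneg

/-- The upper boundary of the `(ε, 0)`-privacy region, as a function of the prefix mass `s`. -/
noncomputable def privacyEnvelope (ε s : ℝ) : ℝ :=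
  min (Real.exp ε * s) (1 - Real.exp (-ε) * (1 - s))

theorem privacyEnvelope_mono (ε : ℝ) : Monotone (privacyEnvelope ε) := by
  refine Monotone.min (fun s t hst => ?_) (fun s t hst => ?_)
  · exact mul_le_mul_of_nonneg_left hst (Real.exp_pos ε).le
  · have := mul_le_mul_of_nonneg_left (sub_le_sub_left hst 1) (Real.exp_pos (-ε)).le
    linarith

theorem privacyEnvelope_nonneg {ε s : ℝ} (hε : 0 ≤ ε) (hs0 : 0 ≤ s) (hs1 : s ≤ 1) :
    0 ≤ privacyEnvelope ε s := by
  have hexp : Real.exp (-ε) ≤ 1 := Real.exp_le_one_iff.mpr (neg_nonpos.mpr hε)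
  have : Real.exp (-ε) * (1 - s) ≤ 1 * 1 :=
    mul_le_mul hexp (by linarith) (by linarith) zero_le_one
  exact le_min (mul_nonneg (Real.exp_pos ε).le hs0) (by linarith)

theorem privacyEnvelope_one {ε : ℝ} (hε : 0 ≤ ε) : privacyEnvelope ε 1 = 1 := by
  simp only [privacyEnvelope, mul_one, sub_self, mul_zero, sub_zero]
  exact min_eq_right (Real.one_le_exp hε)

theorem sPrime_zero (ε δ : ℝ) {q : ℕ} (p : Fin q → ℝ) : sPrime ε δ q p 0 = 0 :=
  if_pos rfl

theorem sPrime_of_ne_zero {ε δ : ℝ} {q k : ℕ} (p : Fin q → ℝ) (hk : k ≠ 0) :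
    sPrime ε δ q p k = min 1 (privacyEnvelope ε (prefixSum q p k) + δ) :=
  if_neg hk

section Distribution

variable {ε δ : ℝ} {q : ℕ} {p : Fin q → ℝ} (hε : 0 ≤ ε) (hδ : 0 ≤ δ) (hp : IsDist q p)
include hε hδ hp

theorem sPrime_nonneg (k : ℕ) : 0 ≤ sPrime ε δ q p k := by
  rcases eq_or_ne k 0 with rfl | hk
  · exact (sPrime_zero ε δ p).ge
  rw [sPrime_of_ne_zero p hk]
  have hs1 : prefixSum q p k ≤ 1 := hp.2 ▸ prefixSum_le_sum hp.1 k
  have := privacyEnvelope_nonneg hε (prefixSum_nonneg hp.1 k) hs1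
  exact le_min zero_le_one (by linarith)

theorem sPrime_mono : Monotone (sPrime ε δ q p) := by
  intro j k hjk
  rcases eq_or_ne j 0 with rfl | hj
  · exact (sPrime_zero ε δ p).trans_le (sPrime_nonneg hε hδ hp k)
  rw [sPrime_of_ne_zero p hj, sPrime_of_ne_zero p (by omega)]
  gcongr
  exact privacyEnvelope_mono ε (prefixSum_mono hp.1 hjk)

theorem sPrime_self (hq : q ≠ 0) : sPrime ε δ q p q = 1 := by
  rw [sPrime_of_ne_zero p hq, prefixSum_eq_sum_of_le p le_rfl, hp.2, privacyEnvelope_one hε]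
  exact min_eq_left (by linarith)

end Distribution

theorem isDist_of_monotone {q : ℕ} {s : ℕ → ℝ} (hs : Monotone s) (h0 : s 0 = 0) (hq : s q = 1) :
    IsDist q fun k => s (k + 1) - s k := by
  refine ⟨fun k => sub_nonneg.mpr (hs k.val.le_succ), ?_⟩
  rw [Fin.sum_univ_eq_sum_range (fun k => s (k + 1) - s k), Finset.sum_range_sub, hq, h0, sub_zero]

theorem Tmap_isDist_general (q : ℕ) (hq : 1 ≤ q) (ε δ : ℝ) (hε : 0 ≤ ε) (hδ0 : 0 ≤ δ)
    (p : Fin q → ℝ) (hp : IsDist q p) :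
    IsDist q (Tmap ε δ q p) ∧
    (∀ j k : ℕ, j ≤ k → k ≤ q → sPrime ε δ q p j ≤ sPrime ε δ q p k) ∧
    sPrime ε δ q p q = 1 := by
  have hmono := sPrime_mono hε hδ0 hp
  have hone := sPrime_self hε hδ0 hp (by omega)
  exact ⟨isDist_of_monotone hmono (sPrime_zero ε δ p) hone, fun j k hjk _ => hmono hjk, hone⟩

/-- For ε ≥ 0, 0 ≤ δ ≤ 1, and any distribution `p`, `T_{ε,δ}(p)` is again a
distribution; equivalently, the modified prefix sums are nondecreasing (up to index `q`)
and `s'_q = 1`. -/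
theorem Tmap_isDist (q : ℕ) (hq : 1 ≤ q) (ε δ : ℝ) (hε : 0 ≤ ε) (hδ0 : 0 ≤ δ) (hδ1 : δ ≤ 1)
    (p : Fin q → ℝ) (hp : IsDist q p) :
    IsDist q (Tmap ε δ q p) ∧
    (∀ j k : ℕ, j ≤ k → k ≤ q → sPrime ε δ q p j ≤ sPrime ε δ q p k) ∧
    sPrime ε δ q p q = 1 :=
  Tmap_isDist_general q hq ε δ hε hδ0 p hp
end

section
/- Let ε ≥ 0, 0 ≤ δ ≤ 1, and let p be a distribution on V. Every distribution p'' on V that is (ε,δ)-close to p is dominated by T_{ε,δ}(p), i.e., p'' ⪯ T_{ε,δ}(p). -/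
open Finset

/-!
The prefix sums of `T_{ε,δ}(p)` telescope to `s'_k`. With `S = {1, …, k}`, closeness on `S` gives
`s''_k ≤ e^ε s_k + δ`, and closeness on `Sᶜ` gives `1 - s_k ≤ e^ε (1 - s''_k) + δ`, i.e.
`s''_k ≤ 1 - e^{-ε} (1 - s_k) + e^{-ε} δ`; together with `s''_k ≤ 1` this is `s''_k ≤ s'_k`.
-/

theorem prefixSum_succ {q : ℕ} (x : Fin q → ℝ) {k : ℕ} (hk : k < q) :
    prefixSum q x (k + 1) = prefixSum q x k + x ⟨k, hk⟩ := by
  have hfilter : univ.filter (fun i : Fin q => (i : ℕ) < k + 1)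
      = insert ⟨k, hk⟩ (univ.filter fun i : Fin q => (i : ℕ) < k) := by
    ext i
    simp only [mem_filter, mem_univ, true_and, mem_insert, Fin.ext_iff]
    omega
  rw [prefixSum, hfilter, sum_insert (by simp), add_comm]
  rfl

theorem prefixSum_Tmap (ε δ : ℝ) {q : ℕ} (p : Fin q → ℝ) {k : ℕ} (hk : k ≤ q) :
    prefixSum q (Tmap ε δ q p) k = sPrime ε δ q p k := by
  induction k with
  | zero => simp [prefixSum, sPrime]
  | succ m ih =>
    rw [prefixSum_succ _ hk, ih (Nat.le_of_succ_le hk), Tmap]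
    ring

theorem IsDist.prefixSum_le_one {q : ℕ} {p : Fin q → ℝ} (hp : IsDist q p) (k : ℕ) :
    prefixSum q p k ≤ 1 :=
  hp.2 ▸ sum_le_sum_of_subset_of_nonneg (subset_univ _) fun i _ _ => hp.1 i

theorem Close.sum_le_one_sub {ε δ : ℝ} {q : ℕ} {P Q : Fin q → ℝ} (h : Close ε δ q P Q)
    (hε : 0 ≤ ε) (hδ : 0 ≤ δ) (hP : ∑ k, P k = 1) (hQ : ∑ k, Q k = 1) (S : Finset (Fin q)) :
    ∑ k ∈ S, P k ≤ 1 - Real.exp (-ε) * (1 - ∑ k ∈ S, Q k) + δ := by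
  have hPc : ∑ k ∈ Sᶜ, P k = 1 - ∑ k ∈ S, P k := by
    rw [← hP, ← sum_add_sum_compl S]; ring
  have hQc : ∑ k ∈ Sᶜ, Q k = 1 - ∑ k ∈ S, Q k := by
    rw [← hQ, ← sum_add_sum_compl S]; ring
  have hcompl := (h Sᶜ).2
  rw [hPc, hQc] at hcompl
  have hexp : Real.exp (-ε) * Real.exp ε = 1 := by rw [← Real.exp_add]; simp
  have hexp_le : Real.exp (-ε) ≤ 1 := Real.exp_le_one_iff.mpr (neg_nonpos.mpr hε)
  calc ∑ k ∈ S, P k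
      = 1 - Real.exp (-ε) * (Real.exp ε * (1 - ∑ k ∈ S, P k)) := by
        rw [← mul_assoc, hexp]; ring
    _ ≤ 1 - Real.exp (-ε) * (1 - ∑ k ∈ S, Q k - δ) := by
        gcongr; linarith
    _ = 1 - Real.exp (-ε) * (1 - ∑ k ∈ S, Q k) + Real.exp (-ε) * δ := by ring
    _ ≤ 1 - Real.exp (-ε) * (1 - ∑ k ∈ S, Q k) + δ := by
        gcongr; exact mul_le_of_le_one_left hδ hexp_le

theorem dominated_by_Tmap_general (q : ℕ) (ε δ : ℝ) (hε : 0 ≤ ε) (hδ0 : 0 ≤ δ)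
    (p : Fin q → ℝ) (hp : IsDist q p)
    (p'' : Fin q → ℝ) (hp'' : IsDist q p'') (hclose : Close ε δ q p'' p) :
    Dom q p'' (Tmap ε δ q p) := by
  intro k hk
  rw [prefixSum_Tmap ε δ p hk]
  rcases k with _ | k
  · simp [prefixSum, sPrime]
  rw [sPrime, if_neg k.succ_ne_zero, ← min_add_add_right]
  exact le_min (hp''.prefixSum_le_one _)
    (le_min (hclose _).1 (hclose.sum_le_one_sub hε hδ0 hp''.2 hp.2 _))

/-- Every distribution `p''` that is `(ε,δ)`-close to `p` is dominated by
`T_{ε,δ}(p)`. -/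
theorem dominated_by_Tmap (q : ℕ) (hq : 1 ≤ q) (ε δ : ℝ) (hε : 0 ≤ ε) (hδ0 : 0 ≤ δ)
    (hδ1 : δ ≤ 1) (p : Fin q → ℝ) (hp : IsDist q p)
    (p'' : Fin q → ℝ) (hp'' : IsDist q p'') (hclose : Close ε δ q p'' p) :
    Dom q p'' (Tmap ε δ q p) :=
  dominated_by_Tmap_general q ε δ hε hδ0 p hp p'' hp'' hclose
end

section
/- (Nonexistence of an optimal mechanism under a non-homogeneous boundary condition.) Let q = 3, V = {1,2,3}, ε = ln 2, δ = 0. Let D = {d₁, d₂, d₃, d₄, d₅} with the 5-cycle neighborhood relation d₁ ∼ d₂ ∼ d₃ ∼ d₄ ∼ d₅ ∼ d₁, and rainbows f(dᵢ) = (1,2,3) for 1 ≤ i ≤ 4 and f(d₅) = (1,3,2). Consider the constraints M(d₁) = (0.2, 0.1, 0.7) and M(d₄) = (0.4, 0.1, 0.5), where a triple (a,b,c) lists the probabilities of outputs 1, 2, 3 respectively. Then: (a) there exists an (ln 2, 0)-DP mechanism on (D, ∼) satisfying both constraints; and (b) there is no (ln 2, 0)-DP mechanism M satisfying both constraints that dominates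 every (ln 2, 0)-DP mechanism satisfying both constraints. -/
open Finset

/-- The 5-cycle neighborhood relation `d₁ ∼ d₂ ∼ d₃ ∼ d₄ ∼ d₅ ∼ d₁` on `Fin 5`
(indices `0,…,4` standing for `d₁,…,d₅`). -/
def cycleRel (i j : Fin 5) : Prop := j = i + 1 ∨ i = j + 1

/-- The rainbows of Example `eg:no-optimal`: `f(dᵢ) = (1,2,3)` for `1 ≤ i ≤ 4` (the identity
permutation of `Fin 3`) and `f(d₅) = (1,3,2)` (the permutation swapping the 2nd and 3rd
preference positions). -/
noncomputable def rainbow5 (i : Fin 5) : Equiv.Perm (Fin 3) :=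
  if i = 4 then Equiv.swap 1 2 else 1

/-- `M` is an `(ln 2, 0)`-DP mechanism on the 5-cycle satisfying the two boundary
constraints `M(d₁) = (0.2, 0.1, 0.7)` and `M(d₄) = (0.4, 0.1, 0.5)`. -/
def GoodMech (M : Fin 5 → Fin 3 → ℝ) : Prop :=
  (∀ d, IsDist 3 (M d)) ∧
  (∀ d d', cycleRel d d' → Close (Real.log 2) 0 3 (M d) (M d')) ∧
  M 0 = ![0.2, 0.1, 0.7] ∧ M 3 = ![0.4, 0.1, 0.5]

/-!
Two admissible mechanisms pull in incompatible directions. `mechA` puts mass `0.7` on output 1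
at `d₃`, the most that `(ln 2, 0)`-closeness to `M(d₄) = (0.4, 0.1, 0.5)` allows; this forces
`M(d₃) = (0.7, 0.05, 0.25)`. `mechB` puts mass `0.6` on the top two outputs `{1, 2}` at `d₂`.
A mechanism dominating `mechA` at `d₃` therefore has `M(d₃)₂ = 0.05`, so at `d₂` it has
`M(d₂)₁ ≤ 2 · 0.2` (from `d₁`) and `M(d₂)₂ ≤ 2 · 0.05` (from `d₃`): its top-two mass at `d₂` is at
most `0.5 < 0.6`, and it cannot dominate `mechB` there.
-/

namespace Close

variable {ε δ : ℝ} {q : ℕ} {P Q : Fin q → ℝ}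

theorem symm (h : Close ε δ q P Q) : Close ε δ q Q P := fun S => ⟨(h S).2, (h S).1⟩

theorem apply_le (h : Close ε δ q P Q) (k : Fin q) : P k ≤ Real.exp ε * Q k + δ := by
  simpa using (h {k}).1

theorem of_forall_le (h₁ : ∀ k, P k ≤ Real.exp ε * Q k) (h₂ : ∀ k, Q k ≤ Real.exp ε * P k) :
    Close ε 0 q P Q := fun S =>
  ⟨by simpa [Finset.mul_sum] using Finset.sum_le_sum fun k _ => h₁ k,
    by simpa [Finset.mul_sum] using Finset.sum_le_sum fun k _ => h₂ k⟩

theorem apply_le_two_mul (h : Close (Real.log 2) 0 q P Q) (k : Fin q) : P k ≤ 2 * Q k := by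
  simpa [Real.exp_log two_pos] using h.apply_le k

end Close

theorem prefixSum_one {n : ℕ} (p : Fin (n + 1) → ℝ) : prefixSum (n + 1) p 1 = p 0 := by
  simp [prefixSum, Finset.sum_filter]

theorem prefixSum_two {n : ℕ} (p : Fin (n + 2) → ℝ) : prefixSum (n + 2) p 2 = p 0 + p 1 := by
  simp [prefixSum, Finset.sum_filter, Fin.sum_univ_succ]

theorem rainbow5_of_ne {i : Fin 5} (h : i ≠ 4) : rainbow5 i = 1 := if_neg h

theorem isDist_three {a b c : ℝ} (ha : 0 ≤ a) (hb : 0 ≤ b) (hc : 0 ≤ c) (h : a + b + c = 1) :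
    IsDist 3 ![a, b, c] :=
  ⟨fun k => by fin_cases k <;> assumption, by simpa [Fin.sum_univ_three] using h⟩

theorem close_log_two_three {a b c a' b' c' : ℝ}
    (h₁ : a ≤ 2 * a') (h₂ : b ≤ 2 * b') (h₃ : c ≤ 2 * c')
    (h₁' : a' ≤ 2 * a) (h₂' : b' ≤ 2 * b) (h₃' : c' ≤ 2 * c) :
    Close (Real.log 2) 0 3 ![a, b, c] ![a', b', c'] := by
  apply Close.of_forall_le <;> intro k <;> fin_cases k <;>
    simpa [Real.exp_log two_pos] using by assumption

theorem GoodMech.of_succ {M : Fin 5 → Fin 3 → ℝ} (hdist : ∀ d, IsDist 3 (M d))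
    (hclose : ∀ d, Close (Real.log 2) 0 3 (M d) (M (d + 1)))
    (h₀ : M 0 = ![0.2, 0.1, 0.7]) (h₃ : M 3 = ![0.4, 0.1, 0.5]) : GoodMech M := by
  refine ⟨hdist, ?_, h₀, h₃⟩
  rintro d d' (rfl | rfl)
  exacts [hclose d, (hclose d').symm]

noncomputable def mechA : Fin 5 → Fin 3 → ℝ :=
  ![![0.2, 0.1, 0.7], ![0.4, 0.1, 0.5], ![0.7, 0.05, 0.25], ![0.4, 0.1, 0.5], ![0.4, 0.1, 0.5]]

noncomputable def mechB : Fin 5 → Fin 3 → ℝ :=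
  ![![0.2, 0.1, 0.7], ![0.4, 0.2, 0.4], ![0.4, 0.15, 0.45], ![0.4, 0.1, 0.5], ![0.3, 0.1, 0.6]]

theorem goodMech_mechA : GoodMech mechA := by
  refine .of_succ (fun d => ?_) (fun d => ?_) rfl rfl
  · fin_cases d <;> exact isDist_three (by norm_num) (by norm_num) (by norm_num) (by norm_num)
  · fin_cases d <;>
      exact close_log_two_three (by norm_num) (by norm_num) (by norm_num)
        (by norm_num) (by norm_num) (by norm_num)

theorem goodMech_mechB : GoodMech mechB := by
  refine .of_succ (fun d => ?_) (fun d => ?_) rfl rfl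
  · fin_cases d <;> exact isDist_three (by norm_num) (by norm_num) (by norm_num) (by norm_num)
  · fin_cases d <;>
      exact close_log_two_three (by norm_num) (by norm_num) (by norm_num)
        (by norm_num) (by norm_num) (by norm_num)

namespace GoodMech

variable {M : Fin 5 → Fin 3 → ℝ}

theorem close (hM : GoodMech M) (d d' : Fin 5) (h : cycleRel d d') :
    Close (Real.log 2) 0 3 (M d) (M d') :=
  hM.2.1 d d' h

theorem apply_two_one_le (hM : GoodMech M) (h : 0.7 ≤ M 2 0) : M 2 1 ≤ 0.05 := by
  have hsum : M 2 0 + M 2 1 + M 2 2 = 1 := by simpa [Fin.sum_univ_three] using (hM.1 2).2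
  have h₁ := (hM.close 3 2 (Or.inr rfl)).apply_le_two_mul 1
  have h₂ := (hM.close 3 2 (Or.inr rfl)).apply_le_two_mul 2
  simp only [hM.2.2.2] at h₁ h₂
  norm_num [Matrix.cons_val_two] at h₁ h₂
  linarith

theorem top_two_le (hM : GoodMech M) (h : 0.7 ≤ M 2 0) : M 1 0 + M 1 1 ≤ 0.5 := by
  have h₀ := (hM.close 1 0 (Or.inr rfl)).apply_le_two_mul 0
  have h₁ := (hM.close 1 2 (Or.inl rfl)).apply_le_two_mul 1
  simp only [hM.2.2.1] at h₀
  norm_num at h₀ h₁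
  linarith [hM.apply_two_one_le h]

end GoodMech

/-- nonexistence of an optimal mechanism for a non-homogeneous boundary
condition: (a) there exists an `(ln 2, 0)`-DP mechanism on the 5-cycle satisfying both
constraints, and (b) no such mechanism dominates (w.r.t. the preference vectors induced by
the rainbows) every such mechanism. -/
theorem no_optimal_mechanism :
    (∃ M : Fin 5 → Fin 3 → ℝ, GoodMech M) ∧
    ¬ ∃ M : Fin 5 → Fin 3 → ℝ, GoodMech M ∧
        ∀ M' : Fin 5 → Fin 3 → ℝ, GoodMech M' →
          ∀ d : Fin 5,
            Dom 3 (fun k => M' d (rainbow5 d k)) (fun k => M d (rainbow5 d k)) := by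
  refine ⟨⟨mechA, goodMech_mechA⟩, ?_⟩
  rintro ⟨M, hM, hdom⟩
  have hA := hdom mechA goodMech_mechA 2 1 (by norm_num)
  have hB := hdom mechB goodMech_mechB 1 2 (by norm_num)
  simp only [prefixSum_one, prefixSum_two, rainbow5_of_ne (by decide : (2 : Fin 5) ≠ 4),
    rainbow5_of_ne (by decide : (1 : Fin 5) ≠ 4), Equiv.Perm.one_apply] at hA hB
  norm_num [mechA, mechB, Matrix.cons_val_two] at hA hB
  linarith [hM.top_two_le (by linarith)]
end
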